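/- arXiv:1208.3094 — 4 statements merged into one kernel-verified Lean document; each statement's English description precedes it below -/
import Mathlib

section
/- Let A ≠ 0 be a non-negative operator in the Krein space K, let K be indefinite, and assume that ker A is indefinite. Then W(A) ∪ {0} = ℝ. -/
open Set Filter Topology

variable {K : Type*} [NormedAddCommGroup K] [InnerProductSpace ℂ K] [CompleteSpace K]

/-- The real part of the Krein space inner product `[x, y] = ⟪J x, y⟫`. -/
noncomputable def kreinRe (J : K →L[ℂ] K) (x y : K) : ℝ :=
  (@inner ℂ K _ (J x) y).re

/-- `J` is a fundamental symmetry: selfadjoint and an involution. -/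
def IsFundamentalSymmetry (J : K →L[ℂ] K) : Prop :=
  IsSelfAdjoint J ∧ J ∘L J = 1

/-- `A` is a non-negative operator in the Krein space `(K, [·,·])` induced by `J`:
`J ∘ A` is selfadjoint on the Hilbert space `K` and `[A x, x] ≥ 0` for all `x`. -/
def IsKreinNonneg (J A : K →L[ℂ] K) : Prop :=
  IsSelfAdjoint (J ∘L A) ∧ ∀ x : K, 0 ≤ kreinRe J (A x) x

/-- The Krein space numerical range `W(A)`. -/
noncomputable def kreinW (J A : K →L[ℂ] K) : Set ℝ :=
  {r : ℝ | ∃ x : K, kreinRe J x x ≠ 0 ∧ r = kreinRe J (A x) x / kreinRe J x x}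

/-- The Krein space co-numerical range `W_co(A)`. -/
noncomputable def kreinWco (J A : K →L[ℂ] K) : Set ℝ :=
  {r : ℝ | ∃ x : K, kreinRe J (A x) x ≠ 0 ∧
    r = kreinRe J (A x) (A x) / kreinRe J (A x) x}

/-- The real spectrum `σℝ(A)` of `A`. -/
def sigmaR (A : K →L[ℂ] K) : Set ℝ := {t : ℝ | (t : ℂ) ∈ spectrum ℂ A}

/-- The Krein space `(K, [·,·])` is indefinite. -/
def KreinIndefinite (J : K →L[ℂ] K) : Prop :=
  (∃ x : K, 0 < kreinRe J x x) ∧ ∃ y : K, kreinRe J y y < 0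


/-!
A nonzero neutral vector `w` of the indefinite subspace `ker A` exists because the quadratic
`s ↦ [u + s v, u + s v]` changes sign. Since `J A ≥ 0` and `A ≠ 0`, some `z` has `[A z, z] > 0`,
and replacing `z` by `z ± J w` if necessary also arranges `[z, w] ≠ 0`. On the line `z + ℂ w`
the form `[A x, x]` is constant, while `[x, x]` is a nonconstant affine function of the real part
of the parameter and so takes every real value; hence every `r ≠ 0` is a quotient
`[A x, x] / [x, x]`.
-/

open RCLike
open scoped InnerProductSpace ComplexConjugate

namespace LinearMap.IsSymmetric

variable {𝕜 E : Type*} [RCLike 𝕜] [NormedAddCommGroup E] [InnerProductSpace 𝕜 E]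
  {S : E →ₗ[𝕜] E}

theorem re_inner_map_add_smul_self (hS : S.IsSymmetric) (x y : E) (c : 𝕜) :
    re ⟪S (x + c • y), x + c • y⟫_𝕜
      = re ⟪S x, x⟫_𝕜 + 2 * re (c * ⟪S x, y⟫_𝕜) + ‖c‖ ^ 2 * re ⟪S y, y⟫_𝕜 := by
  have hyx : ⟪S y, x⟫_𝕜 = conj ⟪S x, y⟫_𝕜 := by rw [hS y x, inner_conj_symm]
  have hcc : conj c * (c * ⟪S y, y⟫_𝕜) = (‖c‖ ^ 2 : ℝ) * ⟪S y, y⟫_𝕜 := by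
    rw [← mul_assoc, RCLike.conj_mul, ofReal_pow]
  rw [map_add, map_smul, inner_add_left, inner_add_right, inner_add_right, inner_smul_left,
    inner_smul_left, inner_smul_right, inner_smul_right, hyx, hcc, ← map_mul, map_add, map_add,
    map_add, conj_re, re_ofReal_mul]
  ring

theorem re_inner_map_smul_self (hS : S.IsSymmetric) (y : E) (c : 𝕜) :
    re ⟪S (c • y), c • y⟫_𝕜 = ‖c‖ ^ 2 * re ⟪S y, y⟫_𝕜 := by
  simpa using hS.re_inner_map_add_smul_self 0 y c

theorem re_inner_map_add_self_add_re_inner_map_sub_self (hS : S.IsSymmetric) (x y : E) :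
    re ⟪S (x + y), x + y⟫_𝕜 + re ⟪S (x - y), x - y⟫_𝕜
      = 2 * (re ⟪S x, x⟫_𝕜 + re ⟪S y, y⟫_𝕜) := by
  have h := hS.re_inner_map_add_smul_self x y
  rw [sub_eq_add_neg, ← one_smul 𝕜 y, ← neg_smul, h, h]
  simp only [norm_neg, norm_one, neg_mul, one_mul, map_neg, one_smul]
  ring

theorem inner_map_add_smul_self_of_apply_eq_zero (hS : S.IsSymmetric) {w : E} (hw : S w = 0)
    (z : E) (c : 𝕜) : ⟪S (z + c • w), z + c • w⟫_𝕜 = ⟪S z, z⟫_𝕜 := by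
  simp [inner_add_right, inner_smul_right, hS z w, hw]

theorem exists_mem_ne_zero_re_inner_map_self_eq_zero (hS : S.IsSymmetric) {p : Submodule 𝕜 E}
    {u v : E} (hu : u ∈ p) (hu0 : u ≠ 0) (huS : re ⟪S u, u⟫_𝕜 ≤ 0)
    (hv : v ∈ p) (hv0 : v ≠ 0) (hvS : 0 ≤ re ⟪S v, v⟫_𝕜) :
    ∃ w ∈ p, w ≠ 0 ∧ re ⟪S w, w⟫_𝕜 = 0 := by
  rcases huS.eq_or_lt with huS | huS
  · exact ⟨u, hu, hu0, huS⟩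
  rcases hvS.eq_or_lt with hvS | hvS
  · exact ⟨v, hv, hv0, hvS.symm⟩
  set α := re ⟪S u, u⟫_𝕜
  set β := re ⟪S v, v⟫_𝕜
  set e := re ⟪S u, v⟫_𝕜
  -- the discriminant `4 e² - 4 α β` of `s ↦ re ⟪S (u + s v), u + s v⟫` is positive as `α < 0 < β`
  obtain ⟨s, hs⟩ : ∃ s : ℝ, β * (s * s) + 2 * e * s + α = 0 := by
    refine exists_quadratic_eq_zero hvS.ne' ⟨2 * √(e ^ 2 - α * β), ?_⟩
    have : 0 ≤ e ^ 2 - α * β := by nlinarith [sq_nonneg e]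
    rw [discrim, mul_mul_mul_comm, Real.mul_self_sqrt this]
    ring
  refine ⟨u + (s : 𝕜) • v, p.add_mem hu (p.smul_mem _ hv), fun h => ?_, ?_⟩
  · rw [add_eq_zero_iff_eq_neg, ← neg_smul] at h
    have := hS.re_inner_map_smul_self v (-(s : 𝕜))
    rw [← h] at this
    nlinarith [sq_nonneg ‖-(s : 𝕜)‖]
  · rw [hS.re_inner_map_add_smul_self, re_ofReal_mul, norm_ofReal, sq_abs]
    linear_combination hs

theorem exists_re_inner_map_self_pos_and_ne_zero {F : Type*} [AddGroup F] (hS : S.IsSymmetric)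
    (f : E →+ F) {z y : E} (hz : 0 < re ⟪S z, z⟫_𝕜) (hy : 0 ≤ re ⟪S y, y⟫_𝕜) (hfy : f y ≠ 0) :
    ∃ x, 0 < re ⟪S x, x⟫_𝕜 ∧ f x ≠ 0 := by
  by_cases hfz : f z = 0
  · have hsum := hS.re_inner_map_add_self_add_re_inner_map_sub_self z y
    by_cases hadd : 0 < re ⟪S (z + y), z + y⟫_𝕜
    · exact ⟨z + y, hadd, by simpa [hfz] using hfy⟩
    · exact ⟨z - y, by linarith, by simpa [hfz] using hfy⟩
  · exact ⟨z, hz, hfz⟩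

theorem surjective_re_inner_map_add_smul_self (hS : S.IsSymmetric) {z w : E}
    (hw : re ⟪S w, w⟫_𝕜 = 0) (hzw : ⟪S z, w⟫_𝕜 ≠ 0) :
    Function.Surjective fun c : 𝕜 => re ⟪S (z + c • w), z + c • w⟫_𝕜 := by
  intro q
  have ha : 0 < ‖⟪S z, w⟫_𝕜‖ := norm_pos_iff.mpr hzw
  set t := (q - re ⟪S z, z⟫_𝕜) / (2 * ‖⟪S z, w⟫_𝕜‖ ^ 2)
  have hre : re ((t : 𝕜) * conj ⟪S z, w⟫_𝕜 * ⟪S z, w⟫_𝕜) = t * ‖⟪S z, w⟫_𝕜‖ ^ 2 := by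
    rw [mul_assoc, RCLike.conj_mul, ← ofReal_pow, ← ofReal_mul, ofReal_re]
  refine ⟨t * conj ⟪S z, w⟫_𝕜, ?_⟩
  simp only [hS.re_inner_map_add_smul_self, hw, mul_zero, add_zero, hre, t]
  field_simp
  ring

end LinearMap.IsSymmetric

theorem exists_kreinRe_apply_pos {J A : K →L[ℂ] K} (hJJ : J ∘L J = 1) (hA : IsKreinNonneg J A)
    (hA0 : A ≠ 0) : ∃ z, 0 < kreinRe J (A z) z := by
  have hT : (J ∘L A : K →ₗ[ℂ] K).IsPositive := ⟨hA.1.isSymmetric, hA.2⟩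
  have hJJx (x : K) : J (J x) = x := congr($hJJ x)
  have hT0 : (J ∘L A : K →ₗ[ℂ] K) ≠ 0 := fun h => hA0 <| ContinuousLinearMap.ext fun x => by
    simpa [hJJx] using congr(J ($h x))
  obtain ⟨z, hz⟩ := hT.ne_zero_iff.mp hT0
  exact ⟨z, (RCLike.pos_iff.mp hz).1⟩

theorem mem_kreinW_of_apply_eq_zero {J A : K →L[ℂ] K} (hJ : IsSelfAdjoint J)
    (hA : IsSelfAdjoint (J ∘L A)) {z w : K} (hAw : A w = 0) (hw : kreinRe J w w = 0)
    (hz : 0 < kreinRe J (A z) z) (hzw : ⟪J z, w⟫_ℂ ≠ 0) {r : ℝ} (hr : r ≠ 0) :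
    r ∈ kreinW J A := by
  obtain ⟨c, hc⟩ := hJ.isSymmetric.surjective_re_inner_map_add_smul_self hw hzw
    (kreinRe J (A z) z / r)
  have hJx : kreinRe J (z + c • w) (z + c • w) = kreinRe J (A z) z / r := hc
  have hAx : kreinRe J (A (z + c • w)) (z + c • w) = kreinRe J (A z) z :=
    congr_arg re (hA.isSymmetric.inner_map_add_smul_self_of_apply_eq_zero (by simp [hAw]) z c)
  refine ⟨z + c • w, hJx ▸ div_ne_zero hz.ne' hr, ?_⟩
  rw [hAx, hJx, div_div_cancel₀ hz.ne']

theorem stmt_3_general (J A : K →L[ℂ] K) (hJ : IsFundamentalSymmetry J)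
    (hA : IsKreinNonneg J A) (hA0 : A ≠ 0)
    (hkerind : (∃ u : K, A u = 0 ∧ u ≠ 0 ∧ kreinRe J u u ≤ 0) ∧
      (∃ v : K, A v = 0 ∧ v ≠ 0 ∧ 0 ≤ kreinRe J v v)) :
    kreinW J A ∪ {0} = Set.univ := by
  obtain ⟨hJsa, hJJ⟩ := hJ
  obtain ⟨⟨u, hu, hu0, huJ⟩, ⟨v, hv, hv0, hvJ⟩⟩ := hkerind
  obtain ⟨w, hw, hw0, hwJ⟩ := hJsa.isSymmetric.exists_mem_ne_zero_re_inner_map_self_eq_zero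
    (p := LinearMap.ker (A : K →ₗ[ℂ] K)) hu hu0 huJ hv hv0 hvJ
  obtain ⟨z₁, hz₁⟩ := exists_kreinRe_apply_pos hJJ hA hA0
  -- `J w` pairs with `w` to `‖w‖²` in the Krein form
  obtain ⟨z, hz, hzw⟩ := hA.1.isSymmetric.exists_re_inner_map_self_pos_and_ne_zero
    (AddMonoidHom.mk' (fun x => ⟪J x, w⟫_ℂ) fun x y => by simp)
    hz₁ (hA.2 (J w)) (by simpa [show J (J w) = w from congr($hJJ w)] using hw0)
  exact Set.eq_univ_of_forall fun r => or_iff_not_imp_right.mpr fun hr =>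
    mem_kreinW_of_apply_eq_zero hJsa hA.1 hw hwJ hz hzw hr

/-- Theorem (ii): if `ker A` is indefinite, then `W(A) ∪ {0} = ℝ`. -/
theorem stmt_3 (J A : K →L[ℂ] K) (hJ : IsFundamentalSymmetry J)
    (hA : IsKreinNonneg J A) (hA0 : A ≠ 0) (hind : KreinIndefinite J)
    (hkerind : (∃ u : K, A u = 0 ∧ u ≠ 0 ∧ kreinRe J u u ≤ 0) ∧
      (∃ v : K, A v = 0 ∧ v ≠ 0 ∧ 0 ≤ kreinRe J v v)) :
    kreinW J A ∪ {0} = Set.univ :=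
  stmt_3_general J A hJ hA hA0 hkerind
end

section
/- Let A ≠ 0 be a non-negative operator in the Krein space K and let K be indefinite. Then 0 ∈ W(A) if and only if 0 is an eigenvalue of A and ker A is not neutral, i.e. if and only if there exists x ∈ K with A x = 0 and re⟪J x, x⟫ ≠ 0. -/
open Set Filter Topology

variable {K : Type*} [NormedAddCommGroup K] [InnerProductSpace ℂ K] [CompleteSpace K]

/-!
If `[A x, x] = 0` for a non-negative `A`, then `x` is a zero of the non-negative quadratic
form `y ↦ ⟪J A y, y⟫` of the Hilbert space, hence (Cauchy–Schwarz, here via the discriminant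
of `t ↦ ⟪J A (x + t J A x), x + t J A x⟫`) `J A x = 0`, and `A x = 0` because `J` is
invertible.
-/

namespace ContinuousLinearMap

variable {𝕜 E : Type*} [RCLike 𝕜] [NormedAddCommGroup E] [InnerProductSpace 𝕜 E]

theorem IsPositive.apply_eq_zero_of_re_inner_self_eq_zero {T : E →L[𝕜] E} (hT : T.IsPositive)
    {x : E} (hx : RCLike.re (inner 𝕜 (T x) x) = 0) : T x = 0 := by
  have hquad : ∀ t : ℝ, 0 ≤ RCLike.re (inner 𝕜 (T (T x)) (T x)) * (t * t)
      + 2 * RCLike.re (inner 𝕜 (T x) (T x)) * t + 0 := fun t => by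
    have hsymm : RCLike.re (inner 𝕜 (T (T x)) x) = RCLike.re (inner 𝕜 (T x) (T x)) :=
      congrArg RCLike.re (hT.isSymmetric (T x) x)
    have hnonneg := hT.re_inner_nonneg_left (x + (t : 𝕜) • T x)
    simp only [map_add, map_smul, inner_add_left, inner_add_right, inner_smul_left,
      inner_smul_right, RCLike.conj_ofReal, RCLike.re_ofReal_mul, hx, hsymm] at hnonneg
    linarith
  have hdisc := discrim_le_zero hquad
  rw [discrim, inner_self_eq_norm_sq] at hdisc
  have hnorm : ‖T x‖ ^ 4 ≤ 0 := by nlinarith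
  exact norm_eq_zero.mp (pow_eq_zero_iff four_ne_zero |>.mp (hnorm.antisymm (by positivity)))

end ContinuousLinearMap

theorem IsFundamentalSymmetry.apply_apply {J : K →L[ℂ] K} (hJ : IsFundamentalSymmetry J)
    (x : K) : J (J x) = x := by
  simpa using congrArg (· x) hJ.2

theorem IsKreinNonneg.isPositive_comp {J A : K →L[ℂ] K} (hA : IsKreinNonneg J A) :
    (J ∘L A).IsPositive :=
  ContinuousLinearMap.isPositive_def.mpr
    ⟨ContinuousLinearMap.isSelfAdjoint_iff_isSymmetric.mp hA.1, hA.2⟩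

theorem IsKreinNonneg.apply_eq_zero_of_kreinRe_eq_zero {J A : K →L[ℂ] K}
    (hJ : IsFundamentalSymmetry J) (hA : IsKreinNonneg J A) {x : K}
    (hx : kreinRe J (A x) x = 0) : A x = 0 := by
  have hJAx : J (A x) = 0 := hA.isPositive_comp.apply_eq_zero_of_re_inner_self_eq_zero hx
  rw [← hJ.apply_apply (A x), hJAx, map_zero]

theorem stmt_6_general (J A : K →L[ℂ] K) (hJ : IsFundamentalSymmetry J)
    (hA : IsKreinNonneg J A) :
    (0 : ℝ) ∈ kreinW J A ↔ ∃ x : K, A x = 0 ∧ kreinRe J x x ≠ 0 := by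
  constructor
  · rintro ⟨x, hx0, hquot⟩
    have hAx : kreinRe J (A x) x = 0 := (div_eq_zero_iff.mp hquot.symm).resolve_right hx0
    exact ⟨x, hA.apply_eq_zero_of_kreinRe_eq_zero hJ hAx, hx0⟩
  · rintro ⟨x, hAx, hx0⟩
    exact ⟨x, hx0, by simp [kreinRe, hAx]⟩

/-- `0 ∈ W(A)` iff `0` is an eigenvalue of `A` and `ker A` is not neutral. -/
theorem stmt_6 (J A : K →L[ℂ] K) (hJ : IsFundamentalSymmetry J)
    (hA : IsKreinNonneg J A) (hA0 : A ≠ 0) (hind : KreinIndefinite J) :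
    (0 : ℝ) ∈ kreinW J A ↔ ∃ x : K, A x = 0 ∧ kreinRe J x x ≠ 0 :=
  stmt_6_general J A hJ hA
end

section
/- Let A be a non-negative operator in the Krein space K. Then for every x ∈ K one has re⟪J (A (A (A x))), x⟫ ≤ ‖A‖² · re⟪J (A x), x⟫ (the inequality [A³x, x] ≤ ‖A‖² [Ax, x] obtained from Reid's inequality). -/
open Set Filter Topology

variable {K : Type*} [NormedAddCommGroup K] [InnerProductSpace ℂ K] [CompleteSpace K]

/-!
Put `T = J A`, a positive operator on the Hilbert space `K`. Since `J` and `J A` are selfadjoint,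
`A⋆ J = J A`, so `J A² = A⋆ J A` is selfadjoint as well: `A` is symmetric for the semi-inner
product `⟪T ·, ·⟫`, and `[A³ x, x] = ⟪T A x, A x⟫`. For `c k = re ⟪T Aᵏ x, Aᵏ x⟫`, Cauchy–Schwarz
for `⟪T ·, ·⟫` gives `c k ^ 2 ≤ c (2 k) * c 0`, while `c k ≤ ‖T‖ ‖x‖² ‖A‖²ᵏ`. Iterating the
first bound along `k = 2ⁿ` gives
`(c 1 / c 0) ^ 2ⁿ ≤ c (2ⁿ) / c 0 ≤ (‖T‖ ‖x‖² / c 0) ‖A‖ ^ (2 * 2ⁿ)`, and taking `2ⁿ`-th roots as `n → ∞` yields `c 1 ≤ ‖A‖² c 0`.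
-/

lemma le_one_of_forall_pow_two_pow_le {x M : ℝ} (h : ∀ n : ℕ, x ^ 2 ^ n ≤ M) : x ≤ 1 := by
  by_contra! hx
  obtain ⟨n, hn⟩ := pow_unbounded_of_one_lt M hx
  exact (hn.trans_le (pow_le_pow_right₀ hx.le Nat.lt_two_pow_self.le)).not_ge (h n)

lemma div_pow_two_pow_le_of_sq_le_mul {c : ℕ → ℝ} (hc : ∀ k, 0 ≤ c k)
    (hsq : ∀ k, c k ^ 2 ≤ c (2 * k) * c 0) (hc₀ : 0 < c 0) (n : ℕ) :
    (c 1 / c 0) ^ 2 ^ n ≤ c (2 ^ n) / c 0 := by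
  induction n with
  | zero => simp
  | succ n ih =>
    calc (c 1 / c 0) ^ 2 ^ (n + 1) = ((c 1 / c 0) ^ 2 ^ n) ^ 2 := by rw [pow_succ, pow_mul]
      _ ≤ (c (2 ^ n) / c 0) ^ 2 := by gcongr; exact pow_nonneg (div_nonneg (hc 1) hc₀.le) _
      _ ≤ c (2 * 2 ^ n) * c 0 / c 0 ^ 2 := by rw [div_pow]; gcongr; exact hsq _
      _ = c (2 ^ (n + 1)) / c 0 := by field_simp; ring_nf

lemma le_mul_of_sq_le_mul_of_le_mul_pow {c : ℕ → ℝ} {C r : ℝ} (hc : ∀ k, 0 ≤ c k)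
    (hsq : ∀ k, c k ^ 2 ≤ c (2 * k) * c 0) (hbound : ∀ k, c k ≤ C * r ^ k) (hr : 0 ≤ r) :
    c 1 ≤ r * c 0 := by
  rcases (hc 0).eq_or_lt with hc₀ | hc₀
  · have : c 1 ^ 2 ≤ 0 := by simpa [← hc₀] using hsq 1
    rw [← hc₀, pow_eq_zero_iff two_ne_zero |>.mp (this.antisymm (sq_nonneg _)), mul_zero]
  rcases hr.eq_or_lt with rfl | hr
  · simpa using hbound 1
  suffices c 1 / (r * c 0) ≤ 1 by rwa [div_le_one (by positivity)] at this
  refine le_one_of_forall_pow_two_pow_le (M := C / c 0) fun n => ?_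
  calc (c 1 / (r * c 0)) ^ 2 ^ n = (c 1 / c 0) ^ 2 ^ n / r ^ 2 ^ n := by
        rw [mul_comm, ← div_div, div_pow]
    _ ≤ c (2 ^ n) / c 0 / r ^ 2 ^ n := by gcongr; exact div_pow_two_pow_le_of_sq_le_mul hc hsq hc₀ n
    _ ≤ C * r ^ 2 ^ n / c 0 / r ^ 2 ^ n := by gcongr; exact hbound _
    _ = C / c 0 := by field_simp

lemma IsSelfAdjoint.mul_mul_self_right {R : Type*} [Semigroup R] [StarMul R] {j a : R}
    (hj : IsSelfAdjoint j) (hja : IsSelfAdjoint (j * a)) : IsSelfAdjoint (j * a * a) := by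
  have h : star a * j = j * a := by simpa [star_mul, hj.star_eq] using hja.star_eq
  simpa only [h] using hj.conjugate' a

section

variable {𝕜 E : Type*} [RCLike 𝕜] [NormedAddCommGroup E] [InnerProductSpace 𝕜 E]

local notation "⟪" x ", " y "⟫" => inner 𝕜 x y

namespace ContinuousLinearMap

variable {T A : E →L[𝕜] E}

theorem norm_pow_apply_le (A : E →L[𝕜] E) (k : ℕ) (x : E) : ‖(A ^ k) x‖ ≤ ‖A‖ ^ k * ‖x‖ := by
  induction k with
  | zero => simp
  | succ k ih =>
    calc ‖(A ^ (k + 1)) x‖ = ‖A ((A ^ k) x)‖ := by rw [pow_succ', mul_apply_eq_comp]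
      _ ≤ ‖A‖ * (‖A‖ ^ k * ‖x‖) := A.le_opNorm_of_le ih
      _ = ‖A‖ ^ (k + 1) * ‖x‖ := by ring

theorem inner_apply_pow_apply (hT : (T : E →ₗ[𝕜] E).IsSymmetric)
    (hTA : (T ∘L A : E →ₗ[𝕜] E).IsSymmetric) (k : ℕ) (u v : E) :
    ⟪T ((A ^ k) u), v⟫ = ⟪T u, (A ^ k) v⟫ := by
  induction k generalizing u with
  | zero => simp
  | succ k ih =>
    calc ⟪T ((A ^ (k + 1)) u), v⟫ = ⟪T (A u), (A ^ k) v⟫ := by rw [pow_succ, mul_apply_eq_comp, ih]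
      _ = ⟪u, T (A ((A ^ k) v))⟫ := hTA u _
      _ = ⟪T u, (A ^ (k + 1)) v⟫ := by rw [pow_succ', mul_apply_eq_comp]; exact (hT u _).symm

namespace IsPositive

abbrev preInnerProductSpaceCore (hT : T.IsPositive) : PreInnerProductSpace.Core 𝕜 E where
  inner x y := ⟪T x, y⟫
  conj_inner_symm x y := by rw [inner_conj_symm, hT.inner_left_eq_inner_right]
  re_inner_nonneg := hT.re_inner_nonneg_left
  add_left x y z := by rw [map_add, inner_add_left]
  smul_left x y r := by rw [map_smul, inner_smul_left]

theorem norm_inner_sq_le (hT : T.IsPositive) (x y : E) :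
    ‖⟪T x, y⟫‖ ^ 2 ≤ RCLike.re ⟪T x, x⟫ * RCLike.re ⟪T y, y⟫ := by
  have h := @InnerProductSpace.Core.inner_mul_inner_self_le 𝕜 E _ _ _
    hT.preInnerProductSpaceCore x y
  change ‖⟪T x, y⟫‖ * ‖⟪T y, x⟫‖ ≤ RCLike.re ⟪T x, x⟫ * RCLike.re ⟪T y, y⟫ at h
  rwa [hT.inner_left_eq_inner_right y, norm_inner_symm y, ← sq] at h

theorem re_inner_apply_apply_le (hT : T.IsPositive)
    (hTA : (T ∘L A : E →ₗ[𝕜] E).IsSymmetric) (x : E) :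
    RCLike.re ⟪T (A x), A x⟫ ≤ ‖A‖ ^ 2 * RCLike.re ⟪T x, x⟫ := by
  set c : ℕ → ℝ := fun k => RCLike.re ⟪T ((A ^ k) x), (A ^ k) x⟫
  have hc : ∀ k, 0 ≤ c k := fun k => hT.re_inner_nonneg_left _
  have hsq : ∀ k, c k ^ 2 ≤ c (2 * k) * c 0 := by
    intro k
    have hck : c k = RCLike.re ⟪T ((A ^ (2 * k)) x), x⟫ := by
      rw [two_mul, pow_add, mul_apply_eq_comp, inner_apply_pow_apply hT.isSymmetric hTA]
    calc c k ^ 2 ≤ ‖⟪T ((A ^ (2 * k)) x), x⟫‖ ^ 2 := by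
          rw [hck, sq_le_sq, abs_norm]; exact RCLike.abs_re_le_norm _
      _ ≤ c (2 * k) * c 0 := by simpa [c] using hT.norm_inner_sq_le _ _
  have hbound : ∀ k, c k ≤ ‖T‖ * ‖x‖ ^ 2 * (‖A‖ ^ 2) ^ k := by
    intro k
    calc c k ≤ ‖T ((A ^ k) x)‖ * ‖(A ^ k) x‖ := re_inner_le_norm _ _
      _ ≤ ‖T‖ * ‖(A ^ k) x‖ * ‖(A ^ k) x‖ := by gcongr; exact T.le_opNorm _
      _ ≤ ‖T‖ * (‖A‖ ^ k * ‖x‖) * (‖A‖ ^ k * ‖x‖) := by gcongr <;> exact A.norm_pow_apply_le k x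
      _ = ‖T‖ * ‖x‖ ^ 2 * (‖A‖ ^ 2) ^ k := by ring
  simpa [c] using le_mul_of_sq_le_mul_of_le_mul_pow hc hsq hbound (by positivity)

end IsPositive

end ContinuousLinearMap

end

/-- Reid's inequality: `[A³ x, x] ≤ ‖A‖² [A x, x]` for all `x`. -/
theorem stmt_12 (J A : K →L[ℂ] K) (hJ : IsFundamentalSymmetry J)
    (hA : IsKreinNonneg J A) :
    ∀ x : K, kreinRe J (A (A (A x))) x ≤ ‖A‖ ^ 2 * kreinRe J (A x) x := by
  intro x
  have hT : (J ∘L A).IsPositive := ⟨hA.1.isSymmetric, hA.2⟩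
  have hTA : (J ∘L A ∘L A : K →ₗ[ℂ] K).IsSymmetric := (hJ.1.mul_mul_self_right hA.1).isSymmetric
  calc kreinRe J (A (A (A x))) x = RCLike.re (inner ℂ ((J ∘L A) (A x)) (A x)) := by
        simpa [kreinRe] using congrArg RCLike.re
          (ContinuousLinearMap.inner_apply_pow_apply hT.isSymmetric hTA 1 (A x) x)
    _ ≤ ‖A‖ ^ 2 * kreinRe J (A x) x := hT.re_inner_apply_apply_le hTA x
end

section
/- Let A ≠ 0 be a non-negative operator in the Krein space K, let K be indefinite, and assume that the range of A is negative. Then no t > 0 satisfies (t : ℂ) ∈ spectrum ℂ A (i.e. σℝ(A) ∩ (0,∞) = ∅), the set σℝ(A) ∩ (-∞,0) is nonempty, and W_co(A) \ {ν₋, μ₋} = (ν₋, μ₋) (the open interval from ν₋ to μ₋). -/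
open Set Filter Topology

variable {K : Type*} [NormedAddCommGroup K] [InnerProductSpace ℂ K] [CompleteSpace K]

/-! Write `J A = R * R` with `R` selfadjoint and put `S = R J R`. Then `[A x, x] = ‖R x‖²`
and `[A x, A x] = ⟪S (R x), R x⟫`, so `W_co(A)` is the set of Rayleigh quotients of `S` on
`ran R \ {0}`, and `σ(A) \ {0} = σ(S) \ {0}` because `A = (J R) R` and `S = R (J R)`.
Negativity of `ran A` makes `S` negative definite on `ran R ⊇ ran S`.

For a selfadjoint `S` that is negative definite on a subspace `V ⊇ ran S`, an approximate
eigenvector `z` for `t ∈ σ(S) \ {0}` yields the approximate eigenvector `S z ∈ V`; hence every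
such `t` is a limit of Rayleigh quotients on `V`. This forces `σ(S) ⊆ (-∞, 0]` and, with the
intermediate value theorem on segments of `V`, gives `(ν₋, μ₋) ⊆ W_co(A)`. Conversely
`ν₋ ≤ W_co(A)` since `σ(S) ⊆ [ν₋, 0]`, and `W_co(A) ≤ μ₋` because `σ(S) ⊆ {0} ∪ (-∞, μ₋]`:
when `μ₋ < 0` the point `0` is isolated in `σ(S)`, so `S` has a generalized inverse from the
functional calculus, and `V ⊆ ran S` since `V` meets `ker S` trivially. -/

namespace ContinuousLinearMap

section RCLike

variable {𝕜 E : Type*} [RCLike 𝕜] [NormedAddCommGroup E] [InnerProductSpace 𝕜 E]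

lemma rayleighQuotient_neg {T : E →L[𝕜] E} {y : E} (h : T.reApplyInnerSelf y < 0) :
    T.rayleighQuotient y < 0 := by
  have hy : y ≠ 0 := by rintro rfl; simp [reApplyInnerSelf_apply] at h
  exact div_neg_of_neg_of_pos h (pow_pos (norm_pos_iff.2 hy) 2)

lemma exists_rayleighQuotient_eq_of_lt_of_lt (T : E →L[𝕜] E) {V : Submodule 𝕜 E}
    {y₁ y₂ : E} (h₁ : y₁ ∈ V) (h₂ : y₂ ∈ V) (hy₁ : y₁ ≠ 0) (hy₂ : y₂ ≠ 0) {r : ℝ}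
    (hr₁ : T.rayleighQuotient y₁ < r) (hr₂ : r < T.rayleighQuotient y₂) :
    ∃ y ∈ V, y ≠ 0 ∧ T.rayleighQuotient y = r := by
  set w : ℝ → E := fun s => ((1 - s : ℝ) : 𝕜) • y₁ + ((s : ℝ) : 𝕜) • y₂
  set g : ℝ → ℝ := fun s => T.reApplyInnerSelf (w s) - r * ‖w s‖ ^ 2
  have hg : Continuous g :=
    (T.reApplyInnerSelf_continuous.comp (by fun_prop)).sub (by fun_prop)
  have hg₀ : g 0 < 0 := by
    rw [rayleighQuotient, div_lt_iff₀ (pow_pos (norm_pos_iff.2 hy₁) 2)] at hr₁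
    simp only [g, w]
    simpa using hr₁
  have hg₁ : 0 < g 1 := by
    rw [rayleighQuotient, lt_div_iff₀ (pow_pos (norm_pos_iff.2 hy₂) 2)] at hr₂
    simp only [g, w]
    simpa using hr₂
  obtain ⟨s, -, hs⟩ :=
    intermediate_value_Icc zero_le_one hg.continuousOn ⟨hg₀.le, hg₁.le⟩
  -- otherwise `y₂` is a multiple of `y₁`, with the same Rayleigh quotient
  have hws : w s ≠ 0 := by
    intro h0
    have hs0 : ((s : ℝ) : 𝕜) ≠ 0 := by
      rintro hs0
      simp [w, RCLike.ofReal_eq_zero.1 hs0, hy₁] at h0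
    have hy : y₂ = (-((1 - s : ℝ) : 𝕜) / (s : 𝕜)) • y₁ := by
      rw [div_eq_inv_mul, mul_smul, neg_smul, ← eq_neg_of_add_eq_zero_right h0, smul_smul,
        inv_mul_cancel₀ hs0, one_smul]
    have hc : -((1 - s : ℝ) : 𝕜) / (s : 𝕜) ≠ 0 := by
      rintro hc
      rw [hc, zero_smul] at hy
      exact hy₂ hy
    rw [hy, rayleigh_smul _ _ hc] at hr₂
    linarith
  refine ⟨w s, V.add_mem (V.smul_mem _ h₁) (V.smul_mem _ h₂), hws, ?_⟩
  rw [rayleighQuotient, div_eq_iff (pow_pos (norm_pos_iff.2 hws) 2).ne']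
  linarith [show g s = 0 from hs]

end RCLike

variable {H : Type*} [NormedAddCommGroup H] [InnerProductSpace ℂ H]

lemma reApplyInnerSelf_sub_algebraMap (T : H →L[ℂ] H) (t : ℝ) (y : H) :
    (T - algebraMap ℝ _ t).reApplyInnerSelf y = T.reApplyInnerSelf y - t * ‖y‖ ^ 2 := by
  simp [Algebra.algebraMap_eq_smul_one, reApplyInnerSelf_apply, inner_sub_left,
    ← Complex.coe_smul, inner_smul_left, inner_self_eq_norm_sq_to_K, ← Complex.ofReal_pow]

lemma abs_rayleighQuotient_sub_le (T : H →L[ℂ] H) (t : ℝ) {y : H} (hy : y ≠ 0) :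
    |T.rayleighQuotient y - t| ≤ ‖(T - algebraMap ℝ _ t) y‖ / ‖y‖ := by
  have hy' : 0 < ‖y‖ := norm_pos_iff.2 hy
  have key :
      T.rayleighQuotient y - t = (T - algebraMap ℝ _ t).reApplyInnerSelf y / ‖y‖ ^ 2 := by
    rw [reApplyInnerSelf_sub_algebraMap]
    field_simp
  rw [key, abs_div, abs_of_pos (pow_pos hy' 2), div_le_div_iff₀ (pow_pos hy' 2) hy', pow_two,
    ← mul_assoc]
  gcongr
  exact (RCLike.abs_re_le_norm _).trans (norm_inner_le_norm _ _)

end ContinuousLinearMap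

namespace IsSelfAdjoint

open ContinuousLinearMap

variable {H : Type*} [NormedAddCommGroup H] [InnerProductSpace ℂ H] [CompleteSpace H]
  {S : H →L[ℂ] H}

lemma forall_le_spectrum_iff (hS : IsSelfAdjoint S) {c : ℝ} :
    (∀ s ∈ spectrum ℝ S, c ≤ s) ↔ ∀ z, c * ‖z‖ ^ 2 ≤ S.reApplyInnerSelf z := by
  rw [← algebraMap_le_iff_le_spectrum, ContinuousLinearMap.le_def, isPositive_def']
  simp only [reApplyInnerSelf_sub_algebraMap, sub_nonneg, and_iff_right_iff_imp]
  exact fun _ => hS.sub (.algebraMap _ (.all c))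

lemma exists_norm_sub_algebraMap_apply_lt (hS : IsSelfAdjoint S) {t : ℝ}
    (ht : t ∈ spectrum ℝ S) {δ : ℝ} (hδ : 0 < δ) :
    ∃ z, ‖(S - algebraMap ℝ _ t) z‖ < δ * ‖z‖ := by
  by_contra! h
  set T := S - algebraMap ℝ _ t
  have hT : IsSelfAdjoint T := hS.sub (.algebraMap _ (.all t))
  have hTT : IsUnit (T * T) := by
    refine isUnit_of_forall_le_norm_inner_map (T * T) (c := (δ ^ 2).toNNReal)
      (Real.toNNReal_pos.2 (by positivity)) fun x => ?_
    rw [mul_apply_eq_comp, hT.isSymmetric.apply_clm (T x) x, inner_self_eq_norm_sq_to_K,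
      Real.coe_toNNReal _ (by positivity), norm_pow, RCLike.norm_ofReal, abs_norm, ← mul_pow,
      mul_comm]
    gcongr
    exact h x
  exact spectrum.mem_iff.1 ht (by simpa [T] using (isUnit_mul_self_iff.1 hTT).neg)

lemma exists_abs_rayleighQuotient_apply_sub_lt (hS : IsSelfAdjoint S) {t : ℝ}
    (ht : t ∈ spectrum ℝ S) (ht0 : t ≠ 0) {ε : ℝ} (hε : 0 < ε) :
    ∃ z, S z ≠ 0 ∧ |S.rayleighQuotient (S z) - t| < ε := by
  have hδ : ∀ᶠ δ in 𝓝[>] 0, δ < |t| ∧ ‖S‖ * δ / (|t| - δ) < ε := by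
    have hc : ContinuousAt (fun δ => ‖S‖ * δ / (|t| - δ)) 0 :=
      (continuousAt_const.mul continuousAt_id).div (continuousAt_const.sub continuousAt_id)
        (by simpa using ht0)
    exact nhdsWithin_le_nhds ((eventually_lt_nhds (abs_pos.2 ht0)).and
      (hc.eventually (eventually_lt_nhds (by simpa using hε))))
  obtain ⟨δ, ⟨hδt, hδε⟩, hδ0 : 0 < δ⟩ := (hδ.and self_mem_nhdsWithin).exists
  obtain ⟨z, hz⟩ := hS.exists_norm_sub_algebraMap_apply_lt ht hδ0
  set T := S - algebraMap ℝ _ t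
  -- `S z` is again an approximate eigenvector, now in the range of `S`
  have hz0 : 0 < ‖z‖ := norm_pos_iff.2 fun h => by simp [h] at hz
  have hSz : (|t| - δ) * ‖z‖ < ‖S z‖ := by
    have h := norm_sub_le (S z) (T z)
    rw [show S z - T z = t • z by simp [T, Algebra.algebraMap_eq_smul_one], norm_smul,
      Real.norm_eq_abs] at h
    linarith
  have hSz0 : 0 < ‖S z‖ := lt_of_le_of_lt (by nlinarith) hSz
  refine ⟨z, norm_pos_iff.1 hSz0, ?_⟩
  have hT : T (S z) = S (T z) := by simp [T, Algebra.algebraMap_eq_smul_one]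
  calc |S.rayleighQuotient (S z) - t| ≤ ‖T (S z)‖ / ‖S z‖ :=
        abs_rayleighQuotient_sub_le S t (norm_pos_iff.1 hSz0)
    _ ≤ ‖S‖ * δ * ‖z‖ / ((|t| - δ) * ‖z‖) := by
        rw [hT]
        gcongr ?_ / ?_
        exact (S.le_opNorm _).trans (by rw [mul_assoc]; gcongr)
    _ = ‖S‖ * δ / (|t| - δ) := by field_simp
    _ < ε := hδε

lemma exists_mul_self_mul_eq_self (hS : IsSelfAdjoint S) {μ : ℝ} (hμ : μ < 0)
    (h : ∀ s ∈ spectrum ℝ S, s = 0 ∨ s ≤ μ) : ∃ F, S * S * F = S := by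
  have hg : Continuous fun s : ℝ => (min s μ)⁻¹ :=
    (continuous_id.min continuous_const).inv₀ fun s => ((min_le_right s μ).trans_lt hμ).ne
  refine ⟨cfc (fun s : ℝ => (min s μ)⁻¹) S, ?_⟩
  calc S * S * cfc (fun s : ℝ => (min s μ)⁻¹) S
        = cfc (fun s => s * s * (min s μ)⁻¹) S := by
        rw [cfc_mul _ _ S (by fun_prop) hg.continuousOn, cfc_mul (fun s => s) (fun s => s) S,
          cfc_id' ℝ S]
    _ = cfc id S := cfc_congr fun s hs => by
        rcases h s hs with rfl | hs'
        · simp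
        · rw [min_eq_left hs', mul_assoc, mul_inv_cancel₀ (hs'.trans_lt hμ).ne, mul_one, id]
    _ = S := cfc_id ℝ S

lemma reApplyInnerSelf_apply_le_mul_norm_sq (hS : IsSelfAdjoint S) {μ : ℝ}
    (h : ∀ s ∈ spectrum ℝ S, s = 0 ∨ s ≤ μ) (u : H) :
    S.reApplyInnerSelf (S u) ≤ μ * ‖S u‖ ^ 2 := by
  have hX : S * (S - algebraMap ℝ _ μ) * S ≤ 0 := by
    rw [← cfc_id' ℝ S, ← cfc_const μ S, ← cfc_sub .., ← cfc_mul .., ← cfc_mul ..]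
    refine cfc_nonpos _ _ fun s hs => ?_
    rcases h s hs with rfl | hs'
    · simp
    · nlinarith [mul_self_nonneg s]
  have := ((nonneg_iff_isPositive _).1 (neg_nonneg.2 hX)).re_inner_nonneg_left u
  rw [neg_apply, inner_neg_left, map_neg, mul_apply_eq_comp, mul_apply_eq_comp,
    hS.isSymmetric.apply_clm, neg_nonneg] at this
  have h2 := reApplyInnerSelf_sub_algebraMap S μ (S u)
  rw [reApplyInnerSelf_apply] at h2
  linarith

lemma nonempty_spectrum_inter_Iio_of_reApplyInnerSelf_neg (hS : IsSelfAdjoint S) {y : H}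
    (hy : S.reApplyInnerSelf y < 0) : (spectrum ℝ S ∩ Iio 0).Nonempty := by
  by_contra h
  have h0 : ∀ s ∈ spectrum ℝ S, (0 : ℝ) ≤ s :=
    fun s hs => not_lt.1 fun hs0 => h ⟨s, hs, hs0⟩
  have := hS.forall_le_spectrum_iff.1 h0 y
  linarith

lemma sInf_le_rayleighQuotient (hS : IsSelfAdjoint S) (hne : (spectrum ℝ S ∩ Iio 0).Nonempty)
    {y : H} (hy : y ≠ 0) : sInf (spectrum ℝ S ∩ Iio 0) ≤ S.rayleighQuotient y := by
  have hbdd : BddBelow (spectrum ℝ S ∩ Iio 0) :=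
    (spectrum.isCompact S).bddBelow.mono inter_subset_left
  have hlow : ∀ s ∈ spectrum ℝ S, sInf (spectrum ℝ S ∩ Iio 0) ≤ s := fun s hs => by
    obtain ⟨t, ht⟩ := hne
    rcases lt_or_ge s 0 with hs0 | hs0
    · exact csInf_le hbdd ⟨hs, hs0⟩
    · exact (csInf_le hbdd ht).trans (ht.2.le.trans hs0)
  rw [rayleighQuotient, le_div_iff₀ (pow_pos (norm_pos_iff.2 hy) 2)]
  exact hS.forall_le_spectrum_iff.1 hlow y

section NegativeDefinite

variable {V : Submodule ℂ H} (hS : IsSelfAdjoint S) (hSV : ∀ z, S z ∈ V)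
  (hV : ∀ y ∈ V, y ≠ 0 → S.reApplyInnerSelf y < 0)
include hS hSV hV

lemma nonpos_of_mem_spectrum {s : ℝ} (hs : s ∈ spectrum ℝ S) : s ≤ 0 := by
  by_contra! hs0
  obtain ⟨z, hz, hzs⟩ := hS.exists_abs_rayleighQuotient_apply_sub_lt hs hs0.ne' hs0
  have := rayleighQuotient_neg (hV _ (hSV z) hz)
  linarith [(abs_sub_lt_iff.1 hzs).2]

variable (hne : (spectrum ℝ S ∩ Iio 0).Nonempty)
include hne

lemma rayleighQuotient_le_sSup {y : H} (hy : y ∈ V) (hy0 : y ≠ 0) :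
    S.rayleighQuotient y ≤ sSup (spectrum ℝ S ∩ Iio 0) := by
  set μ := sSup (spectrum ℝ S ∩ Iio 0)
  have hμ : μ ≤ 0 := csSup_le hne fun s hs => hs.2.le
  have hgap : ∀ s ∈ spectrum ℝ S, s = 0 ∨ s ≤ μ := fun s hs =>
    (hS.nonpos_of_mem_spectrum hSV hV hs).eq_or_lt.imp id fun hs0 =>
      le_csSup ⟨0, fun _ ht => ht.2.le⟩ ⟨hs, hs0⟩
  rcases hμ.eq_or_lt with hμ0 | hμ0
  · exact hμ0 ▸ (rayleighQuotient_neg (hV y hy hy0)).le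
  obtain ⟨F, hF⟩ := hS.exists_mul_self_mul_eq_self hμ0 hgap
  -- `y - S (F y)` lies in `ker S ∩ V = 0`
  have hyF : y = S (F y) := by
    by_contra h
    have hker : S (y - S (F y)) = 0 := by
      rw [map_sub, ← mul_apply_eq_comp, ← mul_apply_eq_comp, hF, sub_self]
    have := hV _ (V.sub_mem hy (hSV _)) (sub_ne_zero.2 h)
    simp [reApplyInnerSelf_apply, hker] at this
  rw [rayleighQuotient, div_le_iff₀ (pow_pos (norm_pos_iff.2 hy0) 2), hyF]
  exact hS.reApplyInnerSelf_apply_le_mul_norm_sq hgap _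

theorem rayleighQuotient_image_diff_eq_Ioo :
    S.rayleighQuotient '' ((V : Set H) \ {0}) \
        {sInf (spectrum ℝ S ∩ Iio 0), sSup (spectrum ℝ S ∩ Iio 0)} =
      Ioo (sInf (spectrum ℝ S ∩ Iio 0)) (sSup (spectrum ℝ S ∩ Iio 0)) := by
  ext r
  constructor
  · rintro ⟨⟨y, ⟨hy, hy0⟩, rfl⟩, hr⟩
    simp only [mem_insert_iff, mem_singleton_iff, not_or] at hr
    exact ⟨(hS.sInf_le_rayleighQuotient hne hy0).lt_of_ne' hr.1,
      (hS.rayleighQuotient_le_sSup hSV hV hne hy hy0).lt_of_ne hr.2⟩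
  · rintro ⟨h₁, h₂⟩
    obtain ⟨t₁, ht₁, ht₁r⟩ := exists_lt_of_csInf_lt hne h₁
    obtain ⟨t₂, ht₂, ht₂r⟩ := exists_lt_of_lt_csSup hne h₂
    obtain ⟨z₁, hz₁, hz₁t⟩ :=
      hS.exists_abs_rayleighQuotient_apply_sub_lt ht₁.1 ht₁.2.ne (sub_pos.2 ht₁r)
    obtain ⟨z₂, hz₂, hz₂t⟩ :=
      hS.exists_abs_rayleighQuotient_apply_sub_lt ht₂.1 ht₂.2.ne (sub_pos.2 ht₂r)
    obtain ⟨y, hy, hy0, rfl⟩ :=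
      S.exists_rayleighQuotient_eq_of_lt_of_lt (r := r) (hSV z₁) (hSV z₂) hz₁ hz₂
        (by linarith [(abs_sub_lt_iff.1 hz₁t).1]) (by linarith [(abs_sub_lt_iff.1 hz₂t).2])
    exact ⟨⟨y, ⟨hy, hy0⟩, rfl⟩, by simp [h₁.ne', h₂.ne]⟩

end NegativeDefinite

end IsSelfAdjoint

section Krein

open ContinuousLinearMap

variable {J A R : K →L[ℂ] K}

lemma IsKreinNonneg.exists_isSelfAdjoint_mul_self_eq (hA : IsKreinNonneg J A) :
    ∃ R, IsSelfAdjoint R ∧ R * R = J * A := by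
  have : 0 ≤ J * A := (nonneg_iff_isPositive _).2 (isPositive_def'.2 hA)
  obtain ⟨R, hR, h⟩ := CStarAlgebra.nonneg_iff_exists_isSelfAdjoint_and_eq_mul_self.1 this
  exact ⟨R, hR, h.symm⟩

lemma IsFundamentalSymmetry.apply_eq_of_mul_self_eq (hJ : IsFundamentalSymmetry J)
    (hRR : R * R = J * A) (x : K) : A x = J (R (R x)) := by
  change A x = (J * (R * R)) x
  rw [hRR, ← mul_assoc, show J * J = 1 from hJ.2, one_mul]

lemma kreinRe_apply_self_eq_norm_sq (hR : IsSelfAdjoint R) (hRR : R * R = J * A) (x : K) :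
    kreinRe J (A x) x = ‖R x‖ ^ 2 := by
  have : J (A x) = R (R x) := by change (J * A) x = (R * R) x; rw [hRR]
  rw [kreinRe, this, hR.isSymmetric.apply_clm, inner_self_eq_norm_sq_to_K]
  norm_cast

lemma kreinRe_apply_apply_eq_reApplyInnerSelf (hJ : IsFundamentalSymmetry J)
    (hR : IsSelfAdjoint R) (hRR : R * R = J * A) (x : K) :
    kreinRe J (A x) (A x) = (R * J * R).reApplyInnerSelf (R x) := by
  have hJJ : J (J (R (R x))) = R (R x) := by
    change (J * J) _ = _
    rw [show J * J = 1 from hJ.2, one_apply_eq_self]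
  rw [kreinRe, reApplyInnerSelf_apply, hJ.apply_eq_of_mul_self_eq hRR, hJJ, mul_apply_eq_comp,
    mul_apply_eq_comp, hR.isSymmetric.apply_clm, ← RCLike.re_to_complex]
  exact inner_re_symm _ _

lemma reApplyInnerSelf_neg_of_mem_range (hJ : IsFundamentalSymmetry J) (hR : IsSelfAdjoint R)
    (hRR : R * R = J * A) (hran : ∀ y ∈ Set.range A, y ≠ 0 → kreinRe J y y < 0) :
    ∀ y ∈ LinearMap.range (R : K →ₗ[ℂ] K), y ≠ 0 →
      (R * J * R).reApplyInnerSelf y < 0 := by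
  rintro _ ⟨x, rfl⟩ hx
  rw [coe_coe] at hx ⊢
  rw [← kreinRe_apply_apply_eq_reApplyInnerSelf hJ hR hRR]
  refine hran _ ⟨x, rfl⟩ fun h => hx ?_
  simpa [h, kreinRe] using (kreinRe_apply_self_eq_norm_sq hR hRR x).symm

lemma kreinWco_eq_image_rayleighQuotient (hJ : IsFundamentalSymmetry J) (hR : IsSelfAdjoint R)
    (hRR : R * R = J * A) :
    kreinWco J A =
      (R * J * R).rayleighQuotient '' ((LinearMap.range (R : K →ₗ[ℂ] K) : Set K) \ {0}) := by
  ext r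
  simp only [kreinWco, kreinRe_apply_self_eq_norm_sq hR hRR,
    kreinRe_apply_apply_eq_reApplyInnerSelf hJ hR hRR]
  constructor
  · rintro ⟨x, hx, rfl⟩
    exact ⟨R x, ⟨⟨x, rfl⟩, fun h => hx (by simp_all)⟩, rfl⟩
  · rintro ⟨_, ⟨⟨x, rfl⟩, hx⟩, rfl⟩
    exact ⟨x, by simpa using hx, rfl⟩

lemma mem_spectrum_iff_of_mul_self_eq (hJ : IsFundamentalSymmetry J) (hRR : R * R = J * A)
    {c : ℂ} (hc : c ≠ 0) : c ∈ spectrum ℂ A ↔ c ∈ spectrum ℂ (R * J * R) := by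
  have hA : A = J * R * R := by
    rw [mul_assoc, hRR, ← mul_assoc, show J * J = 1 from hJ.2, one_mul]
  have := congrArg (c ∈ ·) (spectrum.nonzero_mul_comm (J * R) R)
  simpa [hc, ← hA, mul_assoc] using this

end Krein

theorem stmt_14_general (J A : K →L[ℂ] K) (hJ : IsFundamentalSymmetry J)
    (hA : IsKreinNonneg J A) (hA0 : A ≠ 0)
    (hran : ∀ y ∈ Set.range (A : K → K), y ≠ 0 → kreinRe J y y < 0) :
    (∀ t : ℝ, 0 < t → (t : ℂ) ∉ spectrum ℂ A) ∧
      (sigmaR A ∩ Set.Iio 0).Nonempty ∧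
      kreinWco J A \ {sInf (sigmaR A ∩ Set.Iio 0), sSup (sigmaR A ∩ Set.Iio 0)} =
        Set.Ioo (sInf (sigmaR A ∩ Set.Iio 0)) (sSup (sigmaR A ∩ Set.Iio 0)) := by
  obtain ⟨R, hR, hRR⟩ := hA.exists_isSelfAdjoint_mul_self_eq
  set S := R * J * R
  have hS : IsSelfAdjoint S := by simpa [hR.star_eq] using hJ.1.conjugate R
  have hSV (z : K) : S z ∈ LinearMap.range (R : K →ₗ[ℂ] K) := ⟨J (R z), rfl⟩
  have hV := reApplyInnerSelf_neg_of_mem_range hJ hR hRR hran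
  have hσ {t : ℝ} (ht : t ≠ 0) : (t : ℂ) ∈ spectrum ℂ A ↔ t ∈ spectrum ℝ S := by
    rw [mem_spectrum_iff_of_mul_self_eq hJ hRR (by exact_mod_cast ht), ← Complex.coe_algebraMap,
      spectrum.algebraMap_mem_iff]
  have hσneg : sigmaR A ∩ Set.Iio 0 = spectrum ℝ S ∩ Set.Iio 0 := by
    ext t
    exact and_congr_left fun ht => hσ ht.ne
  obtain ⟨x, hx⟩ : ∃ x, R x ≠ 0 := by
    by_contra! h
    exact hA0 (ContinuousLinearMap.ext fun x => by simp [hJ.apply_eq_of_mul_self_eq hRR, h])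
  have hne := hS.nonempty_spectrum_inter_Iio_of_reApplyInnerSelf_neg (hV _ ⟨x, rfl⟩ hx)
  refine ⟨fun t ht hmem => ?_, hσneg ▸ hne, ?_⟩
  · exact (hS.nonpos_of_mem_spectrum hSV hV ((hσ ht.ne').1 hmem)).not_gt ht
  · rw [hσneg, kreinWco_eq_image_rayleighQuotient hJ hR hRR]
    exact hS.rayleighQuotient_image_diff_eq_Ioo hSV hV hne

/-- Theorem (i) on the co-numerical range: if `ran A` is negative, then
`σ(A) ∩ ℝ⁺ = ∅`, `σ(A) ∩ ℝ⁻ ≠ ∅` and `W_co(A) \ {ν₋, μ₋} = (ν₋, μ₋)`. -/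
theorem stmt_14 (J A : K →L[ℂ] K) (hJ : IsFundamentalSymmetry J)
    (hA : IsKreinNonneg J A) (hA0 : A ≠ 0) (hind : KreinIndefinite J)
    (hran : ∀ y ∈ Set.range (A : K → K), y ≠ 0 → kreinRe J y y < 0) :
    (∀ t : ℝ, 0 < t → (t : ℂ) ∉ spectrum ℂ A) ∧
      (sigmaR A ∩ Set.Iio 0).Nonempty ∧
      kreinWco J A \ {sInf (sigmaR A ∩ Set.Iio 0), sSup (sigmaR A ∩ Set.Iio 0)} =
        Set.Ioo (sInf (sigmaR A ∩ Set.Iio 0)) (sSup (sigmaR A ∩ Set.Iio 0)) :=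
  stmt_14_general J A hJ hA hA0 hran
end
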